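/- Let (λₙ)ₙ be a nondecreasing sequence of positive reals tending to infinity with counting bound c·Λ^β ≤ #{n : λₙ² ≤ Λ} ≤ C·Λ^β for Λ ≥ λ₀², where β > 0. Then for any p > β there exist constants c', C' > 0 such that for all N, c'·λ_N^{-2p+2β} ≤ Σ_{n > N} λₙ^{-2p} ≤ C'·λ_N^{-2p+2β}. -/

import Mathlib

open Filter Set

/-!
The upper counting bound at level `Λ = λₙ²` gives `n + 1 ≤ C (λₙ²)^β`, and the lower one at the
least level where it guarantees `n + 1` indices gives `(λₙ²)^β ≤ b (n + 1)`. Hence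
`g n := (λₙ²)^β` is comparable to `n + 1`, and with `q = p / β > 1` the terms `λₙ^{-2p} = g n^{-q}`
are comparable to `(n + 1)^{-q}` while `λ_N^{2β-2p} = g N^{1-q}` is comparable to `(N + 1)^{1-q}`.
The claim thus reduces to `∑_{n > N} n^{-q} ≍ N^{1-q}`, which is the integral test.
-/

lemma finite_setOf_le_of_tendsto {f : ℕ → ℝ} (hf : Tendsto f atTop atTop) (Λ : ℝ) :
    {m | f m ≤ Λ}.Finite := by
  have := hf.eventually_gt_atTop Λ
  rw [← Nat.cofinite_eq_atTop] at this
  simpa using Filter.eventually_cofinite.1 this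

lemma lt_card_setOf_le_iff {f : ℕ → ℝ} (hmono : Monotone f) (htend : Tendsto f atTop atTop)
    {Λ : ℝ} {n : ℕ} : n < Nat.card {m | f m ≤ Λ} ↔ f n ≤ Λ := by
  rw [Nat.card_coe_set_eq]
  constructor
  · intro hn
    by_contra! hΛ
    have hsub : {m | f m ≤ Λ} ⊆ Iio n := fun m hm =>
      lt_of_not_ge fun hnm => (hΛ.trans_le (hmono hnm)).not_ge hm
    have := ncard_le_ncard hsub (finite_Iio n)
    rw [ncard_Iio_nat] at this
    omega
  · intro hn
    have hsub : Iic n ⊆ {m | f m ≤ Λ} := fun m hm => (hmono hm).trans hn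
    have := ncard_le_ncard hsub (finite_setOf_le_of_tendsto htend Λ)
    rw [ncard_Iic_nat] at this
    omega

section CountingBounds

variable {f : ℕ → ℝ} (hmono : Monotone f) (htend : Tendsto f atTop atTop) {β : ℝ}
include hmono htend

lemma add_one_le_mul_rpow_of_card_le {C : ℝ}
    (hcount : ∀ Λ, f 0 ≤ Λ → (Nat.card {m | f m ≤ Λ} : ℝ) ≤ C * Λ ^ β) (n : ℕ) :
    (n : ℝ) + 1 ≤ C * f n ^ β := by
  have hn : n < Nat.card {m | f m ≤ f n} := (lt_card_setOf_le_iff hmono htend).2 le_rfl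
  calc (n : ℝ) + 1 ≤ Nat.card {m | f m ≤ f n} := by exact_mod_cast hn
    _ ≤ C * f n ^ β := hcount (f n) (hmono n.zero_le)

lemma rpow_le_mul_of_le_card (hf0 : 0 ≤ f 0) (hβ : 0 < β) {c : ℝ} (hc : 0 < c)
    (hcount : ∀ Λ, f 0 ≤ Λ → c * Λ ^ β ≤ Nat.card {m | f m ≤ Λ}) (n : ℕ) :
    f n ^ β ≤ max (f 0 ^ β) c⁻¹ * (n + 1) := by
  have hn : (0 : ℝ) ≤ (n + 1) / c := by positivity
  set Λ := max (f 0) (((n + 1) / c) ^ β⁻¹)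
  have hΛβ : Λ ^ β = max (f 0 ^ β) ((n + 1) / c) := by
    rw [Real.rpow_max hf0 (by positivity) hβ.le, Real.rpow_inv_rpow hn hβ.ne']
  have hfn : f n ≤ Λ := by
    refine (lt_card_setOf_le_iff hmono htend).1 ?_
    have : (n : ℝ) + 1 ≤ c * Λ ^ β := by
      rw [hΛβ, ← div_le_iff₀' hc]
      exact le_max_right _ _
    exact_mod_cast (lt_add_one (n : ℝ)).trans_le (this.trans (hcount Λ (le_max_left _ _)))
  calc f n ^ β ≤ Λ ^ β := Real.rpow_le_rpow (hf0.trans (hmono n.zero_le)) hfn hβ.le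
    _ ≤ max (f 0 ^ β) c⁻¹ * (n + 1) := by
      have hn1 : (1 : ℝ) ≤ n + 1 := by linarith [n.cast_nonneg (α := ℝ)]
      rw [hΛβ, div_eq_inv_mul]
      refine max_le ?_ ?_
      · exact (le_max_left _ _).trans (le_mul_of_one_le_right (by positivity) hn1)
      · gcongr
        exact le_max_right _ _

end CountingBounds

lemma antitoneOn_rpow_neg {q : ℝ} (hq : 0 ≤ q) {c : ℝ} (hc : 0 < c) :
    AntitoneOn (fun x : ℝ => x ^ (-q)) (Ici c) := fun _x hx _y _hy hxy =>
  Real.rpow_le_rpow_of_nonpos (hc.trans_le hx) hxy (neg_nonpos.2 hq)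

lemma integral_Ioi_rpow_neg {q : ℝ} (hq : 1 < q) {c : ℝ} (hc : 0 < c) :
    ∫ x in Ioi c, x ^ (-q) = c ^ (1 - q) / (q - 1) := by
  rw [integral_Ioi_rpow_of_lt (by linarith) hc, show -q + 1 = 1 - q by ring, neg_div, ← div_neg, neg_sub]

lemma tsum_rpow_neg_tail_le {q : ℝ} (hq : 1 < q) {N : ℕ} (hN : 0 < N) :
    ∑' n : ℕ, ((n + N + 1 : ℕ) : ℝ) ^ (-q) ≤ (N : ℝ) ^ (1 - q) / (q - 1) := by
  have hN' : (0 : ℝ) < N := Nat.cast_pos.2 hN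
  rw [← integral_Ioi_rpow_neg hq hN']
  exact (antitoneOn_rpow_neg (by linarith) hN').tsum_comp_add_le_integral N
    (integrableOn_Ioi_rpow_of_lt (by linarith) hN')
    fun x hx => Real.rpow_nonneg (hN'.trans hx).le _

lemma le_tsum_rpow_neg_tail {q : ℝ} (hq : 1 < q) {N : ℕ} (hN : 0 < N) :
    (N : ℝ) ^ (1 - q) / (q - 1) ≤ ∑' n : ℕ, ((n + N : ℕ) : ℝ) ^ (-q) := by
  have hN' : (0 : ℝ) < N := Nat.cast_pos.2 hN
  rw [← integral_Ioi_rpow_neg hq hN']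
  exact (antitoneOn_rpow_neg (by linarith) hN').integral_le_tsum_comp_add N
    (Real.summable_nat_rpow.2 (by linarith))
    fun x hx => Real.rpow_nonneg (hN'.trans hx).le _

lemma rpow_le_mul_rpow_of_mul_le {a x y r : ℝ} (ha : 0 < a) (hx : 0 < x) (h : a * x ≤ y)
    (hr : r ≤ 0) : y ^ r ≤ a ^ r * x ^ r := by
  rw [← Real.mul_rpow ha.le hx.le]
  exact Real.rpow_le_rpow_of_nonpos (by positivity) h hr

lemma mul_rpow_le_rpow_of_le_mul {b x y r : ℝ} (hb : 0 ≤ b) (hx : 0 ≤ x) (hy : 0 < y)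
    (h : y ≤ b * x) (hr : r ≤ 0) : b ^ r * x ^ r ≤ y ^ r := by
  rw [← Real.mul_rpow hb hx]
  exact Real.rpow_le_rpow_of_nonpos hy h hr

section LinearGrowth

variable {g : ℕ → ℝ} {a b q : ℝ} (hq : 1 < q)
include hq

lemma summable_rpow_neg_of_mul_le (ha : 0 < a) (hag : ∀ m : ℕ, a * (m + 1) ≤ g m) (k : ℕ) :
    Summable fun n => g (k + n) ^ (-q) := by
  have hzeta : Summable fun n : ℕ => ((n + (k + 1) : ℕ) : ℝ) ^ (-q) :=
    (summable_nat_add_iff (k + 1)).2 (Real.summable_nat_rpow.2 (by linarith))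
  refine (hzeta.mul_left (a ^ (-q))).of_nonneg_of_le
    (fun n => Real.rpow_nonneg ((mul_pos ha (Nat.cast_add_one_pos _)).trans_le (hag _)).le _)
    fun n => rpow_le_mul_rpow_of_mul_le ha (by positivity) ?_ (by linarith)
  convert hag (k + n) using 2
  push_cast
  ring

lemma tsum_rpow_neg_le_of_mul_le (ha : 0 < a) (hag : ∀ m : ℕ, a * (m + 1) ≤ g m) (N : ℕ) :
    ∑' n, g (N + 1 + n) ^ (-q) ≤ a ^ (-q) / (q - 1) * ((N : ℝ) + 1) ^ (1 - q) := by
  have hzeta : Summable fun n : ℕ => ((n + (N + 1) + 1 : ℕ) : ℝ) ^ (-q) :=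
    (summable_nat_add_iff (N + 2)).2 (Real.summable_nat_rpow.2 (by linarith))
  calc ∑' n, g (N + 1 + n) ^ (-q) ≤ ∑' n : ℕ, a ^ (-q) * ((n + (N + 1) + 1 : ℕ) : ℝ) ^ (-q) := by
        refine (summable_rpow_neg_of_mul_le hq ha hag _).tsum_le_tsum (fun n => ?_)
          (hzeta.mul_left _)
        refine rpow_le_mul_rpow_of_mul_le ha (by positivity) ?_ (by linarith)
        convert hag (N + 1 + n) using 2
        push_cast
        ring
    _ ≤ a ^ (-q) * (((N + 1 : ℕ) : ℝ) ^ (1 - q) / (q - 1)) := by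
        rw [tsum_mul_left]
        gcongr
        exact tsum_rpow_neg_tail_le hq N.succ_pos
    _ = a ^ (-q) / (q - 1) * ((N : ℝ) + 1) ^ (1 - q) := by
        push_cast
        ring

lemma le_tsum_rpow_neg_of_le_mul (ha : 0 < a) (hag : ∀ m : ℕ, a * (m + 1) ≤ g m) (hb : 0 < b)
    (hgb : ∀ m : ℕ, g m ≤ b * (m + 1)) (N : ℕ) :
    (2 * b) ^ (-q) / (q - 1) * ((N : ℝ) + 1) ^ (1 - q) ≤ ∑' n, g (N + 1 + n) ^ (-q) := by
  have hzeta : Summable fun n : ℕ => ((n + (N + 1) : ℕ) : ℝ) ^ (-q) :=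
    (summable_nat_add_iff (N + 1)).2 (Real.summable_nat_rpow.2 (by linarith))
  calc (2 * b) ^ (-q) / (q - 1) * ((N : ℝ) + 1) ^ (1 - q)
        = (2 * b) ^ (-q) * (((N + 1 : ℕ) : ℝ) ^ (1 - q) / (q - 1)) := by
        push_cast
        ring
    _ ≤ (2 * b) ^ (-q) * ∑' n : ℕ, ((n + (N + 1) : ℕ) : ℝ) ^ (-q) := by
        gcongr
        exact le_tsum_rpow_neg_tail hq N.succ_pos
    _ ≤ ∑' n, g (N + 1 + n) ^ (-q) := by
        rw [← tsum_mul_left]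
        refine (hzeta.mul_left _).tsum_le_tsum (fun n => ?_)
          (summable_rpow_neg_of_mul_le hq ha hag _)
        have hm : (1 : ℝ) ≤ ((N + 1 + n : ℕ) : ℝ) := by
          exact_mod_cast Nat.succ_le_of_lt (by omega)
        refine mul_rpow_le_rpow_of_le_mul (by positivity) (by positivity)
          ((mul_pos ha (Nat.cast_add_one_pos _)).trans_le (hag _)) ?_ (by linarith)
        calc g (N + 1 + n) ≤ b * (((N + 1 + n : ℕ) : ℝ) + 1) := hgb _
          _ ≤ 2 * b * ((n + (N + 1) : ℕ) : ℝ) := by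
            rw [add_comm n]
            nlinarith

lemma exists_bounds_tsum_rpow_neg (ha : 0 < a) (hag : ∀ m : ℕ, a * (m + 1) ≤ g m) (hb : 0 < b)
    (hgb : ∀ m : ℕ, g m ≤ b * (m + 1)) :
    ∃ c' C' : ℝ, 0 < c' ∧ 0 < C' ∧ ∀ N : ℕ,
      c' * g N ^ (1 - q) ≤ ∑' n, g (N + 1 + n) ^ (-q) ∧
      ∑' n, g (N + 1 + n) ^ (-q) ≤ C' * g N ^ (1 - q) := by
  have hq1 : 0 < q - 1 := by linarith
  refine ⟨(2 * b) ^ (-q) / (q - 1) / a ^ (1 - q), a ^ (-q) / (q - 1) / b ^ (1 - q),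
    by positivity, by positivity, fun N => ⟨?_, ?_⟩⟩
  · have hgN : g N ^ (1 - q) ≤ a ^ (1 - q) * ((N : ℝ) + 1) ^ (1 - q) :=
      rpow_le_mul_rpow_of_mul_le ha (by positivity) (hag N) (by linarith)
    calc (2 * b) ^ (-q) / (q - 1) / a ^ (1 - q) * g N ^ (1 - q)
        ≤ (2 * b) ^ (-q) / (q - 1) / a ^ (1 - q) * (a ^ (1 - q) * ((N : ℝ) + 1) ^ (1 - q)) := by
          gcongr
      _ = (2 * b) ^ (-q) / (q - 1) * ((N : ℝ) + 1) ^ (1 - q) := by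
          field_simp
      _ ≤ ∑' n, g (N + 1 + n) ^ (-q) := le_tsum_rpow_neg_of_le_mul hq ha hag hb hgb N
  · have hgN : b ^ (1 - q) * ((N : ℝ) + 1) ^ (1 - q) ≤ g N ^ (1 - q) :=
      mul_rpow_le_rpow_of_le_mul hb.le (by positivity)
        ((mul_pos ha (Nat.cast_add_one_pos N)).trans_le (hag N)) (hgb N) (by linarith)
    calc ∑' n, g (N + 1 + n) ^ (-q) ≤ a ^ (-q) / (q - 1) * ((N : ℝ) + 1) ^ (1 - q) :=
          tsum_rpow_neg_le_of_mul_le hq ha hag N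
      _ = a ^ (-q) / (q - 1) / b ^ (1 - q) * (b ^ (1 - q) * ((N : ℝ) + 1) ^ (1 - q)) := by
          field_simp
      _ ≤ a ^ (-q) / (q - 1) / b ^ (1 - q) * g N ^ (1 - q) := by
          gcongr

end LinearGrowth

/-- Under a two-sided Weyl-type counting bound with exponent `β > 0`, for any `p > β`
the tail sums satisfy `c' λ_N^{-2p+2β} ≤ Σ_{n > N} λₙ^{-2p} ≤ C' λ_N^{-2p+2β}`. -/
theorem stmt8 (lam : ℕ → ℝ) (hmono : Monotone lam) (hpos : ∀ n, 0 < lam n)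
    (htend : Filter.Tendsto lam Filter.atTop Filter.atTop)
    (β c C : ℝ) (hβ : 0 < β) (hc : 0 < c) (hC : 0 < C)
    (hcount : ∀ Λ : ℝ, (lam 0) ^ 2 ≤ Λ →
      c * Λ ^ β ≤ (Nat.card {n : ℕ | (lam n) ^ 2 ≤ Λ} : ℝ) ∧
      (Nat.card {n : ℕ | (lam n) ^ 2 ≤ Λ} : ℝ) ≤ C * Λ ^ β)
    (p : ℝ) (hp : β < p) :
    ∃ c' C' : ℝ, 0 < c' ∧ 0 < C' ∧ ∀ N : ℕ,
      c' * lam N ^ (-2 * p + 2 * β) ≤ (∑' n : ℕ, lam (N + 1 + n) ^ (-2 * p)) ∧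
      (∑' n : ℕ, lam (N + 1 + n) ^ (-2 * p)) ≤ C' * lam N ^ (-2 * p + 2 * β) := by
  have hsq_mono : Monotone fun n => lam n ^ 2 := fun m n hmn =>
    pow_le_pow_left₀ (hpos m).le (hmono hmn) 2
  have hsq_tend : Tendsto (fun n => lam n ^ 2) atTop atTop :=
    (tendsto_pow_atTop two_ne_zero).comp htend
  have hlower (m : ℕ) : C⁻¹ * ((m : ℝ) + 1) ≤ (lam m ^ 2) ^ β :=
    (inv_mul_le_iff₀ hC).2
      (add_one_le_mul_rpow_of_card_le hsq_mono hsq_tend (fun Λ hΛ => (hcount Λ hΛ).2) m)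
  have hupper := rpow_le_mul_of_le_card hsq_mono hsq_tend (sq_nonneg _) hβ hc
    (fun Λ hΛ => (hcount Λ hΛ).1)
  obtain ⟨c', C', hc', hC', hbounds⟩ := exists_bounds_tsum_rpow_neg ((one_lt_div hβ).2 hp)
    (inv_pos.2 hC) hlower (by positivity) hupper
  refine ⟨c', C', hc', hC', fun N => ?_⟩
  have hexp (m : ℕ) (r : ℝ) : ((lam m ^ 2) ^ β) ^ r = lam m ^ (2 * β * r) := by
    rw [← Real.rpow_natCast, ← Real.rpow_mul (hpos m).le, ← Real.rpow_mul (hpos m).le]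
    norm_num
  rw [show -2 * p + 2 * β = 2 * β * (1 - p / β) by field_simp; ring,
    show -2 * p = 2 * β * -(p / β) by field_simp]
  simpa only [hexp] using hbounds N
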